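/- arXiv:2508.15913 — 3 statements merged into one kernel-verified Lean document; each statement's English description precedes it below -/
import Mathlib

section
/- Let H be a Hermitian operator on a finite-dimensional complex Hilbert space with spectral decomposition H = ∑_{μ∈ι} E_μ P_μ, let S ⊆ ι and P = ∑_{μ∈S} P_μ. If an operator A satisfies A = P A (1−P), then for every β > 0, I_{H,β}(−i[H,A]) − A = −∑_{μ∈S} ∑_{ν∉S} e^{−(E_μ−E_ν)²/(4β²)} P_μ A P_ν. -/
open MeasureTheory Real

/-- The Heisenberg time evolution `τ^H_s(A) = e^{isH} A e^{-isH}`. -/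
noncomputable def heis {V : Type*} [NormedAddCommGroup V] [NormedSpace ℂ V]
    (H : V →L[ℂ] V) (s : ℝ) (A : V →L[ℂ] V) : V →L[ℂ] V :=
  NormedSpace.exp ((Complex.I * (s : ℂ)) • H) * A *
    NormedSpace.exp ((-(Complex.I * (s : ℂ))) • H)

/-- The Gaussian filter `φ_β(t) = (β/√π) e^{-β²t²}`. -/
noncomputable def phi (β t : ℝ) : ℝ := (β / Real.sqrt π) * Real.exp (-(β ^ 2 * t ^ 2))

/-- The almost inverse Liouvillian `I_{H,β}(A) = ∫ φ_β(t) (∫_0^t τ^H_s(A) ds) dt`. -/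
noncomputable def aiL {V : Type*} [NormedAddCommGroup V] [NormedSpace ℂ V]
    (H : V →L[ℂ] V) (β : ℝ) (A : V →L[ℂ] V) : V →L[ℂ] V :=
  ∫ t : ℝ, phi β t • (∫ s in (0:ℝ)..t, heis H s A)

/-!
If `H B = a B` and `B H = b B` (as for `B = P_μ A P_ν`, with `a = E_μ`, `b = E_ν`), then
`τ^H_s(B) = e^{i(a-b)s} B` and `-i[H,B] = -i(a-b) B`, so the inner integral of `I_{H,β}` is the
scalar `1 - e^{i(a-b)t}` times `B`. Integrating it against `φ_β`, whose Fourier transform is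
`ω ↦ e^{-ω²/(4β²)}`, gives `I_{H,β}(-i[H,B]) = B - e^{-(a-b)²/(4β²)} B`. The hypothesis on `A`
makes it the sum of the `P_μ A P_ν` with `μ ∈ S`, `ν ∉ S`, and `I_{H,β}` is additive on these.
-/

section Spectral

variable {𝕜 R ι : Type*} [Fintype ι]

theorem sum_smul_mul_eq_smul [CommSemiring 𝕜] [Semiring R] [Algebra 𝕜 R] {Pr : ι → R}
    (hidem : ∀ μ, Pr μ * Pr μ = Pr μ)
    (horth : ∀ μ ν, μ ≠ ν → Pr μ * Pr ν = 0) (e : ι → 𝕜) (ν : ι) :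
    (∑ μ, e μ • Pr μ) * Pr ν = e ν • Pr ν := by
  rw [Finset.sum_mul, Finset.sum_eq_single ν (fun μ _ hμν => by
      rw [smul_mul_assoc, horth μ ν hμν, smul_zero]) (fun h => (h (Finset.mem_univ ν)).elim),
    smul_mul_assoc, hidem]

theorem mul_sum_smul_eq_smul [CommSemiring 𝕜] [Semiring R] [Algebra 𝕜 R] {Pr : ι → R}
    (hidem : ∀ μ, Pr μ * Pr μ = Pr μ)
    (horth : ∀ μ ν, μ ≠ ν → Pr μ * Pr ν = 0) (e : ι → 𝕜) (μ : ι) :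
    Pr μ * (∑ ν, e ν • Pr ν) = e μ • Pr μ := by
  rw [Finset.mul_sum, Finset.sum_eq_single μ (fun ν _ hνμ => by
      rw [mul_smul_comm, horth μ ν hνμ.symm, smul_zero]) (fun h => (h (Finset.mem_univ μ)).elim),
    mul_smul_comm, hidem]

theorem eq_sum_mul_mul_of_eq_mul_mul_one_sub [Ring R] [DecidableEq ι] {Pr : ι → R}
    (hsum : ∑ μ, Pr μ = 1) (S : Finset ι) {A : R}
    (hA : A = (∑ μ ∈ S, Pr μ) * A * (1 - ∑ μ ∈ S, Pr μ)) :
    A = ∑ p ∈ S ×ˢ Sᶜ, Pr p.1 * A * Pr p.2 := by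
  have hcompl : 1 - ∑ μ ∈ S, Pr μ = ∑ ν ∈ Sᶜ, Pr ν := by
    rw [← hsum, ← Finset.sum_add_sum_compl S, add_sub_cancel_left]
  conv_lhs => rw [hA, hcompl, Finset.sum_mul, Finset.sum_mul_sum, ← Finset.sum_product']

end Spectral

section Exponential

theorem pow_mul_eq_smul_of_mul_eq_smul {𝕜 R : Type*} [CommSemiring 𝕜] [Semiring R]
    [Algebra 𝕜 R] {X Q : R} {e : 𝕜} (h : X * Q = e • Q) (n : ℕ) :
    X ^ n * Q = e ^ n • Q := by
  induction n with
  | zero => simp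
  | succ n ih => rw [pow_succ, mul_assoc, h, mul_smul_comm, ih, smul_smul, pow_succ']

theorem mul_pow_eq_smul_of_mul_eq_smul {𝕜 R : Type*} [CommSemiring 𝕜] [Semiring R]
    [Algebra 𝕜 R] {X Q : R} {e : 𝕜} (h : Q * X = e • Q) (n : ℕ) :
    Q * X ^ n = e ^ n • Q := by
  induction n with
  | zero => simp
  | succ n ih => rw [pow_succ, ← mul_assoc, ih, smul_mul_assoc, h, smul_smul, pow_succ]

variable {𝔸 : Type*} [NormedRing 𝔸] [NormedAlgebra ℂ 𝔸] [CompleteSpace 𝔸]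

theorem ContinuousLinearMap.map_exp_of_map_pow {M : Type*} [NormedAddCommGroup M]
    [NormedSpace ℂ M] (L : 𝔸 →L[ℂ] M) {X : 𝔸} {e : ℂ} {m : M}
    (h : ∀ n : ℕ, L (X ^ n) = e ^ n • m) :
    L (NormedSpace.exp X) = Complex.exp e • m := by
  have he : Summable fun n : ℕ => (n.factorial : ℂ)⁻¹ • e ^ n :=
    NormedSpace.expSeries_summable' e
  rw [NormedSpace.exp_eq_tsum ℂ, L.map_tsum (NormedSpace.expSeries_summable' X),
    Complex.exp_eq_exp_ℂ, NormedSpace.exp_eq_tsum ℂ, ← he.tsum_smul_const]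
  simp only [map_smul, h, smul_smul, smul_eq_mul]

theorem exp_mul_eq_smul_of_mul_eq_smul {X Q : 𝔸} {e : ℂ} (h : X * Q = e • Q) :
    NormedSpace.exp X * Q = Complex.exp e • Q :=
  ((ContinuousLinearMap.mul ℂ 𝔸).flip Q).map_exp_of_map_pow
    (pow_mul_eq_smul_of_mul_eq_smul h)

theorem mul_exp_eq_smul_of_mul_eq_smul {X Q : 𝔸} {e : ℂ} (h : Q * X = e • Q) :
    Q * NormedSpace.exp X = Complex.exp e • Q :=
  (ContinuousLinearMap.mul ℂ 𝔸 Q).map_exp_of_map_pow (mul_pow_eq_smul_of_mul_eq_smul h)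

end Exponential

section Gaussian

variable {β : ℝ}

theorem integrable_phi (hβ : 0 < β) : Integrable (phi β) := by
  unfold phi
  simp_rw [neg_mul_eq_neg_mul (β ^ 2)]
  exact (integrable_exp_neg_mul_sq (by positivity)).const_mul _

theorem integral_phi (hβ : 0 < β) : ∫ t, phi β t = 1 := by
  have : Real.sqrt π ≠ 0 := by positivity
  simp_rw [phi, integral_const_mul, neg_mul_eq_neg_mul (β ^ 2), integral_gaussian,
    Real.sqrt_div' _ (sq_nonneg β), Real.sqrt_sq hβ.le]
  field_simp

theorem phi_mul_cexp (β ω t : ℝ) :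
    (phi β t : ℂ) * Complex.exp (Complex.I * ω * t) =
      ((β / Real.sqrt π : ℝ) : ℂ) *
        (Complex.exp (Complex.I * ω * t) * Complex.exp (-(β : ℂ) ^ 2 * t ^ 2)) := by
  push_cast [phi, neg_mul]
  ring

theorem integrable_phi_mul_cexp (hβ : 0 < β) (ω : ℝ) :
    Integrable fun t : ℝ => (phi β t : ℂ) * Complex.exp (Complex.I * ω * t) := by
  have hb : 0 < ((β : ℂ) ^ 2).re := by norm_cast; positivity
  refine ((integrable_cexp_quadratic hb (Complex.I * ω) 0).const_mul
    ((β / Real.sqrt π : ℝ) : ℂ)).congr (.of_forall fun t => ?_)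
  simp only [phi_mul_cexp, add_zero, Complex.exp_add]
  ring

theorem integral_phi_mul_cexp (hβ : 0 < β) (ω : ℝ) :
    ∫ t : ℝ, (phi β t : ℂ) * Complex.exp (Complex.I * ω * t) =
      (Real.exp (-(ω ^ 2 / (4 * β ^ 2))) : ℂ) := by
  have hb : 0 < ((β : ℂ) ^ 2).re := by norm_cast; positivity
  have hcpow : ((π : ℂ) / (β : ℂ) ^ 2) ^ (1 / 2 : ℂ) = ((Real.sqrt π / β : ℝ) : ℂ) := by
    rw [show ((π : ℂ) / (β : ℂ) ^ 2) = ((π / β ^ 2 : ℝ) : ℂ) by push_cast; rfl,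
      show (1 / 2 : ℂ) = ((1 / 2 : ℝ) : ℂ) by push_cast; rfl,
      ← Complex.ofReal_cpow (by positivity), ← Real.sqrt_eq_rpow,
      Real.sqrt_div' _ (sq_nonneg β), Real.sqrt_sq hβ.le]
  have hnorm : ((β / Real.sqrt π : ℝ) : ℂ) * ((Real.sqrt π / β : ℝ) : ℂ) = 1 := by
    have : Real.sqrt π ≠ 0 := by positivity
    rw [← Complex.ofReal_mul, div_mul_div_comm, mul_comm, div_self (by positivity),
      Complex.ofReal_one]
  simp_rw [phi_mul_cexp, integral_const_mul, fourierIntegral_gaussian hb, hcpow, ← mul_assoc,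
    hnorm, one_mul]
  push_cast
  rw [neg_div]

end Gaussian

theorem integral_neg_I_mul_cexp (ω t : ℝ) :
    ∫ s in (0 : ℝ)..t, -Complex.I * ω * Complex.exp (Complex.I * ω * s) =
      1 - Complex.exp (Complex.I * ω * t) := by
  have hderiv (s : ℝ) : HasDerivAt (fun s : ℝ => Complex.exp (Complex.I * ω * s))
      (Complex.I * ω * Complex.exp (Complex.I * ω * s)) s := by
    simpa [mul_comm] using ((hasDerivAt_id s).ofReal_comp.const_mul (Complex.I * ω)).cexp
  simp_rw [neg_mul, intervalIntegral.integral_neg]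
  rw [intervalIntegral.integral_eq_sub_of_hasDerivAt (fun s _ => hderiv s)
    (by apply Continuous.intervalIntegrable; fun_prop)]
  simp

section Liouvillian

variable {V : Type*} [NormedAddCommGroup V] [NormedSpace ℂ V] {H B : V →L[ℂ] V} {a b β : ℝ}

theorem heis_sum {κ : Type*} (H : V →L[ℂ] V) (s : ℝ) (T : Finset κ) (C : κ → V →L[ℂ] V) :
    heis H s (∑ k ∈ T, C k) = ∑ k ∈ T, heis H s (C k) := by
  simp only [heis, Finset.mul_sum, Finset.sum_mul]

theorem heis_smul (H : V →L[ℂ] V) (s : ℝ) (c : ℂ) (A : V →L[ℂ] V) :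
    heis H s (c • A) = c • heis H s A := by
  rw [heis, mul_smul_comm, smul_mul_assoc, ← heis]

theorem commutator_of_eigen (hHB : H * B = (a : ℂ) • B) (hBH : B * H = (b : ℂ) • B) :
    -Complex.I • (H * B - B * H) = (-Complex.I * (a - b : ℝ)) • B := by
  rw [hHB, hBH, ← sub_smul, smul_smul]
  push_cast
  rfl

variable [CompleteSpace V]

theorem continuous_heis (H A : V →L[ℂ] V) : Continuous fun s => heis H s A := by
  have hexp : Continuous (NormedSpace.exp : (V →L[ℂ] V) → V →L[ℂ] V) :=
    continuous_iff_continuousAt.2 fun X => (NormedSpace.exp_analytic (𝕂 := ℂ) X).continuousAt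
  unfold heis
  fun_prop

theorem aiL_sum {κ : Type*} (T : Finset κ) (C : κ → V →L[ℂ] V)
    (hC : ∀ k ∈ T, Integrable fun t => phi β t • ∫ s in (0 : ℝ)..t, heis H s (C k)) :
    aiL H β (∑ k ∈ T, C k) = ∑ k ∈ T, aiL H β (C k) := by
  have hint (k : κ) (t : ℝ) : IntervalIntegrable (fun s => heis H s (C k)) volume 0 t :=
    (continuous_heis H (C k)).intervalIntegrable 0 t
  simp only [aiL, heis_sum]
  simp_rw [intervalIntegral.integral_finsetSum fun k _ => hint k _, Finset.smul_sum]
  exact integral_finsetSum T hC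

theorem heis_of_eigen (hHB : H * B = (a : ℂ) • B) (hBH : B * H = (b : ℂ) • B) (s : ℝ) :
    heis H s B = Complex.exp (Complex.I * (a - b : ℝ) * s) • B := by
  rw [heis, exp_mul_eq_smul_of_mul_eq_smul (e := Complex.I * s * a)
      (by rw [smul_mul_assoc, hHB, smul_smul]), smul_mul_assoc,
    mul_exp_eq_smul_of_mul_eq_smul (e := -(Complex.I * s) * b)
      (by rw [mul_smul_comm, hBH, smul_smul]), smul_smul, ← Complex.exp_add]
  congr 2
  push_cast
  ring

theorem intervalIntegral_heis_commutator_of_eigen (hHB : H * B = (a : ℂ) • B)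
    (hBH : B * H = (b : ℂ) • B) (t : ℝ) :
    ∫ s in (0 : ℝ)..t, heis H s (-Complex.I • (H * B - B * H)) =
      (1 - Complex.exp (Complex.I * (a - b : ℝ) * t)) • B := by
  simp_rw [commutator_of_eigen hHB hBH, heis_smul, heis_of_eigen hHB hBH, smul_smul,
    intervalIntegral.integral_smul_const, integral_neg_I_mul_cexp]

theorem phi_smul_intervalIntegral_heis_commutator_of_eigen (hHB : H * B = (a : ℂ) • B)
    (hBH : B * H = (b : ℂ) • B) (t : ℝ) :
    phi β t • ∫ s in (0 : ℝ)..t, heis H s (-Complex.I • (H * B - B * H)) =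
      ((phi β t : ℂ) - phi β t * Complex.exp (Complex.I * (a - b : ℝ) * t)) • B := by
  rw [intervalIntegral_heis_commutator_of_eigen hHB hBH, ← Complex.coe_smul, smul_smul,
    mul_sub, mul_one]

theorem integrable_phi_smul_intervalIntegral_heis_commutator_of_eigen (hβ : 0 < β)
    (hHB : H * B = (a : ℂ) • B) (hBH : B * H = (b : ℂ) • B) :
    Integrable fun t => phi β t • ∫ s in (0 : ℝ)..t, heis H s (-Complex.I • (H * B - B * H)) := by
  simp_rw [phi_smul_intervalIntegral_heis_commutator_of_eigen hHB hBH]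
  exact ((integrable_phi hβ).ofReal.sub (integrable_phi_mul_cexp hβ _)).smul_const B

theorem aiL_commutator_of_eigen (hβ : 0 < β) (hHB : H * B = (a : ℂ) • B)
    (hBH : B * H = (b : ℂ) • B) :
    aiL H β (-Complex.I • (H * B - B * H)) = B - Real.exp (-((a - b) ^ 2 / (4 * β ^ 2))) • B := by
  simp_rw [aiL, phi_smul_intervalIntegral_heis_commutator_of_eigen hHB hBH]
  -- `Integrable.ofReal` is stated with the `RCLike` coercion; `f` selects `Complex.ofReal`.
  rw [integral_smul_const, integral_sub (f := fun t => (phi β t : ℂ)) (integrable_phi hβ).ofReal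
      (integrable_phi_mul_cexp hβ (a - b)), integral_complex_ofReal, integral_phi hβ,
    integral_phi_mul_cexp hβ, sub_smul, ← Complex.coe_smul, Complex.ofReal_one, one_smul]

end Liouvillian

theorem stmt5_general {V : Type*} [NormedAddCommGroup V] [InnerProductSpace ℂ V]
    [FiniteDimensional ℂ V]
    {ι : Type*} [Fintype ι] [DecidableEq ι] (E : ι → ℝ) (Pr : ι → (V →L[ℂ] V))
    (hPidem : ∀ μ, Pr μ * Pr μ = Pr μ)
    (hPorth : ∀ μ ν, μ ≠ ν → Pr μ * Pr ν = 0)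
    (hPsum : ∑ μ, Pr μ = 1)
    (H : V →L[ℂ] V) (hH : H = ∑ μ, (E μ : ℂ) • Pr μ)
    (S : Finset ι) (P : V →L[ℂ] V) (hP : P = ∑ μ ∈ S, Pr μ)
    (A : V →L[ℂ] V) (hA : A = P * A * (1 - P))
    (β : ℝ) (hβ : 0 < β) :
    aiL H β ((-Complex.I) • (H * A - A * H)) - A =
      -∑ μ ∈ S, ∑ ν ∈ Sᶜ,
        Real.exp (-((E μ - E ν) ^ 2 / (4 * β ^ 2))) • (Pr μ * A * Pr ν) := by
  have : CompleteSpace V := FiniteDimensional.complete ℂ V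
  have hHB (p : ι × ι) : H * (Pr p.1 * A * Pr p.2) = (E p.1 : ℂ) • (Pr p.1 * A * Pr p.2) := by
    rw [← mul_assoc, ← mul_assoc, hH, sum_smul_mul_eq_smul hPidem hPorth, smul_mul_assoc,
      smul_mul_assoc]
  have hBH (p : ι × ι) : Pr p.1 * A * Pr p.2 * H = (E p.2 : ℂ) • (Pr p.1 * A * Pr p.2) := by
    rw [mul_assoc, hH, mul_sum_smul_eq_smul hPidem hPorth, mul_smul_comm]
  have hAB := eq_sum_mul_mul_of_eq_mul_mul_one_sub hPsum S (hP ▸ hA)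
  have hcomm : -Complex.I • (H * A - A * H) = ∑ p ∈ S ×ˢ Sᶜ,
      -Complex.I • (H * (Pr p.1 * A * Pr p.2) - Pr p.1 * A * Pr p.2 * H) := by
    conv_lhs => rw [hAB]
    simp only [Finset.mul_sum, Finset.sum_mul, ← Finset.sum_sub_distrib, Finset.smul_sum]
  rw [hcomm, aiL_sum _ _ fun p _ =>
      integrable_phi_smul_intervalIntegral_heis_commutator_of_eigen hβ (hHB p) (hBH p),
    Finset.sum_congr rfl fun p _ => aiL_commutator_of_eigen hβ (hHB p) (hBH p),
    Finset.sum_sub_distrib, ← hAB, sub_sub_cancel_left, Finset.sum_product]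

theorem stmt5 {V : Type*} [NormedAddCommGroup V] [InnerProductSpace ℂ V]
    [FiniteDimensional ℂ V]
    {ι : Type*} [Fintype ι] [DecidableEq ι] (E : ι → ℝ) (Pr : ι → (V →L[ℂ] V))
    (hPsa : ∀ μ, IsSelfAdjoint (Pr μ))
    (hPidem : ∀ μ, Pr μ * Pr μ = Pr μ)
    (hPorth : ∀ μ ν, μ ≠ ν → Pr μ * Pr ν = 0)
    (hPsum : ∑ μ, Pr μ = 1)
    (H : V →L[ℂ] V) (hH : H = ∑ μ, (E μ : ℂ) • Pr μ)
    (S : Finset ι) (P : V →L[ℂ] V) (hP : P = ∑ μ ∈ S, Pr μ)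
    (A : V →L[ℂ] V) (hA : A = P * A * (1 - P))
    (β : ℝ) (hβ : 0 < β) :
    aiL H β ((-Complex.I) • (H * A - A * H)) - A =
      -∑ μ ∈ S, ∑ ν ∈ Sᶜ,
        Real.exp (-((E μ - E ν) ^ 2 / (4 * β ^ 2))) • (Pr μ * A * Pr ν) :=
  stmt5_general E Pr hPidem hPorth hPsum H hH S P hP A hA β hβ
end

section
/- Let H be a Hermitian operator on a finite-dimensional complex Hilbert space with spectral decomposition H = ∑_{μ∈ι} E_μ P_μ, let S ⊆ ι, P = ∑_{μ∈S} P_μ, and let γ > 0 be such that |E_μ − E_ν| ≥ γ for all μ ∈ S and ν ∉ S. Let w : ℝ → ℂ be measurable with ∫_ℝ |w(t)|(1+|t|) dt < ∞, ∫_ℝ w(t) dt = 1, and ∫_ℝ w(t) e^{−iλt} dt = 0 whenever |λ| ≥ γ, and set I_H(A) = ∫_ℝ w(t) (∫_0^t τ^H_s(A) ds) dt. If an operator A satisfies A = P A (1−P) or A = (1−P) A P, then for every β > 0, ‖I_{H,β}(A) − I_H(A)‖ ≤ Tr(P)·‖A‖·γ^{−1}·e^{−γ²/(4β²)}. -/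
open MeasureTheory Real

/-- The (exact) inverse Liouvillian associated with a weight function `w`,
`I_H(A) = ∫ w(t) (∫_0^t τ^H_s(A) ds) dt`. -/
noncomputable def invL {V : Type*} [NormedAddCommGroup V] [NormedSpace ℂ V]
    (H : V →L[ℂ] V) (w : ℝ → ℂ) (A : V →L[ℂ] V) : V →L[ℂ] V :=
  ∫ t : ℝ, w t • (∫ s in (0:ℝ)..t, heis H s A)

open scoped InnerProductSpace

/-!
In the eigenbasis of `H`, `τ_s(A) = ∑_{μν} e^{i(E_μ - E_ν)s} P_μ A P_ν`, so `I_{H,β}(A)` and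
`I_H(A)` are combinations of the blocks `P_μ A P_ν` with coefficients
`∫ f(t) (e^{ilt} - 1)/(il) dt`, `l = E_μ - E_ν`, for `f = φ_β` and `f = w` respectively.
The off-diagonal form of `A` only leaves blocks with `|l| ≥ γ`. There `w` has vanishing Fourier
transform while that of `φ_β` is `e^{-l²/(4β²)}`, and both have total mass `1`, so the difference
has coefficients `e^{-l²/(4β²)}/(il)`, of modulus at most `γ⁻¹ e^{-γ²/(4β²)}`.
Grouping the blocks by their index in `S`, each group is `P_μ A R_μ` (or `R_μ A P_μ`) where
`R_μ` is diagonal with respect to the orthogonal projections `P_ν`, hence of norm at most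
`γ⁻¹ e^{-γ²/(4β²)}`, and `‖P_μ‖ ≤ Tr P_μ`.
-/

noncomputable def phaseIntegral (l t : ℝ) : ℂ :=
  ∫ s in (0 : ℝ)..t, Complex.exp (Complex.I * l * s)

theorem norm_exp_I_mul_mul_le (l s : ℝ) : ‖Complex.exp (Complex.I * l * s)‖ ≤ 1 := by
  rw [mul_assoc, ← Complex.ofReal_mul, Complex.norm_exp_I_mul_ofReal]

theorem norm_phaseIntegral_le (l t : ℝ) : ‖phaseIntegral l t‖ ≤ |t| := by
  simpa [phaseIntegral] using intervalIntegral.norm_integral_le_of_norm_le_const (a := 0) (b := t)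
    fun s _ => norm_exp_I_mul_mul_le l s

theorem continuous_phaseIntegral (l : ℝ) : Continuous (phaseIntegral l) :=
  intervalIntegral.continuous_primitive
    (fun _ _ => Continuous.intervalIntegrable (by fun_prop) _ _) 0

theorem phaseIntegral_eq {l : ℝ} (hl : l ≠ 0) (t : ℝ) :
    phaseIntegral l t = (Complex.exp (Complex.I * l * t) - 1) / (Complex.I * l) := by
  rw [phaseIntegral, integral_exp_mul_complex (by simpa using hl)]
  simp

section Weight

variable {f : ℝ → ℂ}

theorem integrable_of_integrable_norm_mul_one_add_abs (hf : AEStronglyMeasurable f)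
    (hf1 : Integrable fun t => ‖f t‖ * (1 + |t|)) : Integrable f :=
  hf1.mono' hf <| ae_of_all _ fun t =>
    le_mul_of_one_le_right (norm_nonneg _) (by linarith [abs_nonneg t])

theorem integrable_mul_phaseIntegral (hf : AEStronglyMeasurable f)
    (hf1 : Integrable fun t => ‖f t‖ * (1 + |t|)) (l : ℝ) :
    Integrable fun t => f t * phaseIntegral l t :=
  hf1.mono' (hf.mul (continuous_phaseIntegral l).aestronglyMeasurable) <| ae_of_all _ fun t => by
    rw [norm_mul]
    exact mul_le_mul_of_nonneg_left ((norm_phaseIntegral_le l t).trans (by linarith))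
      (norm_nonneg _)

theorem integral_mul_phaseIntegral (hf : AEStronglyMeasurable f)
    (hf1 : Integrable fun t => ‖f t‖ * (1 + |t|)) {l : ℝ} (hl : l ≠ 0) :
    ∫ t, f t * phaseIntegral l t =
      ((∫ t, f t * Complex.exp (Complex.I * l * t)) - ∫ t, f t) / (Complex.I * l) := by
  have hf' := integrable_of_integrable_norm_mul_one_add_abs hf hf1
  have hfe : Integrable fun t => f t * Complex.exp (Complex.I * l * t) :=
    hf'.mul_bdd (by fun_prop) (ae_of_all _ (norm_exp_I_mul_mul_le l))
  simp_rw [phaseIntegral_eq hl, ← mul_div_assoc, mul_sub, mul_one]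
  rw [integral_div, integral_sub hfe hf']

end Weight

theorem phi_eq_mul_exp (β t : ℝ) : phi β t = β / √π * Real.exp (-β ^ 2 * t ^ 2) := by
  rw [phi, neg_mul]

theorem phi_nonneg {β : ℝ} (hβ : 0 ≤ β) (t : ℝ) : 0 ≤ phi β t := by
  rw [phi]; positivity

theorem continuous_ofReal_phi (β : ℝ) : Continuous fun t => (phi β t : ℂ) := by
  unfold phi; fun_prop

theorem integrable_norm_phi_mul_one_add_abs {β : ℝ} (hβ : 0 < β) :
    Integrable fun t => ‖(phi β t : ℂ)‖ * (1 + |t|) := by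
  have hb : 0 < β ^ 2 := by positivity
  have h := ((integrable_exp_neg_mul_sq hb).add (integrable_mul_exp_neg_mul_sq hb).abs).const_mul
    (β / √π)
  refine h.congr (ae_of_all _ fun t => ?_)
  dsimp only
  rw [Complex.norm_real, Real.norm_of_nonneg (phi_nonneg hβ.le t), phi_eq_mul_exp]
  simp only [Pi.add_apply, abs_mul, abs_of_pos (Real.exp_pos _)]
  ring

theorem integral_phi_mul_exp {β : ℝ} (hβ : 0 < β) (l : ℝ) :
    ∫ t, (phi β t : ℂ) * Complex.exp (Complex.I * l * t) = Real.exp (-(l ^ 2 / (4 * β ^ 2))) := by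
  have hb : 0 < ((β : ℂ) ^ 2).re := by norm_cast; positivity
  have hsqrt : ((π : ℂ) / (β : ℂ) ^ 2) ^ (1 / 2 : ℂ) = ((√π / β : ℝ) : ℂ) := by
    conv_rhs => rw [← Real.sqrt_sq hβ.le, ← Real.sqrt_div' _ (sq_nonneg β), Real.sqrt_eq_rpow,
      Complex.ofReal_cpow (by positivity)]
    push_cast
    rfl
  simp_rw [phi_eq_mul_exp]
  push_cast
  simp_rw [mul_assoc _ (Complex.exp _), mul_comm (Complex.exp (-(β : ℂ) ^ 2 * _))]
  rw [integral_const_mul, fourierIntegral_gaussian hb, hsqrt]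
  have hβ' : (β : ℂ) ≠ 0 := by exact_mod_cast hβ.ne'
  push_cast
  field_simp

theorem integral_phi_mul_phaseIntegral_sub {β : ℝ} (hβ : 0 < β) {w : ℝ → ℂ}
    (hw : AEStronglyMeasurable w) (hw1 : Integrable fun t => ‖w t‖ * (1 + |t|))
    (hwone : ∫ t, w t = 1) {l : ℝ} (hl : l ≠ 0)
    (hwl : ∫ t, w t * Complex.exp (Complex.I * l * t) = 0) :
    (∫ t, (phi β t : ℂ) * phaseIntegral l t) - ∫ t, w t * phaseIntegral l t =
      Real.exp (-(l ^ 2 / (4 * β ^ 2))) / (Complex.I * l) := by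
  have hphi_one : ∫ t, (phi β t : ℂ) = 1 := by simpa using integral_phi_mul_exp hβ 0
  rw [integral_mul_phaseIntegral (continuous_ofReal_phi β).aestronglyMeasurable
      (integrable_norm_phi_mul_one_add_abs hβ) hl,
    integral_mul_phaseIntegral hw hw1 hl, integral_phi_mul_exp hβ, hphi_one, hwl, hwone]
  ring

theorem norm_exp_div_I_mul_le {γ β l : ℝ} (hγ : 0 < γ) (hl : γ ≤ |l|) :
    ‖(Real.exp (-(l ^ 2 / (4 * β ^ 2))) : ℂ) / (Complex.I * l)‖ ≤
      γ⁻¹ * Real.exp (-(γ ^ 2 / (4 * β ^ 2))) := by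
  rw [norm_div, norm_mul, Complex.norm_I, one_mul, Complex.norm_real, Complex.norm_real,
    Real.norm_of_nonneg (Real.exp_pos _).le, Real.norm_eq_abs, inv_mul_eq_div]
  have hsq : γ ^ 2 ≤ l ^ 2 := by
    rw [← sq_abs l]; gcongr
  gcongr

theorem norm_integral_phi_mul_phaseIntegral_sub_le {β : ℝ} (hβ : 0 < β) {w : ℝ → ℂ}
    (hw : AEStronglyMeasurable w) (hw1 : Integrable fun t => ‖w t‖ * (1 + |t|))
    (hwone : ∫ t, w t = 1) {γ : ℝ} (hγ : 0 < γ)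
    (hwfour : ∀ l : ℝ, γ ≤ |l| →
      ∫ t : ℝ, w t * Complex.exp (-(Complex.I * (l : ℂ) * (t : ℂ))) = 0)
    {l : ℝ} (hl : γ ≤ |l|) :
    ‖(∫ t, (phi β t : ℂ) * phaseIntegral l t) - ∫ t, w t * phaseIntegral l t‖ ≤
      γ⁻¹ * Real.exp (-(γ ^ 2 / (4 * β ^ 2))) := by
  have hl0 : l ≠ 0 := by rintro rfl; simp at hl; linarith
  have hwl : ∫ t, w t * Complex.exp (Complex.I * l * t) = 0 := by
    rw [← hwfour (-l) (by rwa [abs_neg])]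
    push_cast
    simp only [mul_neg, neg_mul, neg_neg]
  rw [integral_phi_mul_phaseIntegral_sub hβ hw hw1 hwone hl0 hwl]
  exact norm_exp_div_I_mul_le hγ hl

section Idempotents

variable {ι : Type*} [Fintype ι]

theorem CompleteOrthogonalIdempotents.sum_smul_pow {𝕜 R : Type*} [CommSemiring 𝕜] [Semiring R]
    [Algebra 𝕜 R] {e : ι → R} (he : CompleteOrthogonalIdempotents e) (a : ι → 𝕜) (n : ℕ) :
    (∑ i, a i • e i) ^ n = ∑ i, a i ^ n • e i := by
  classical
  induction n with
  | zero => simp [he.complete]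
  | succ n ih =>
    rw [pow_succ, ih, Finset.sum_mul_sum]
    refine Finset.sum_congr rfl fun i _ => ?_
    simp [he.mul_eq, pow_succ', smul_smul]

theorem CompleteOrthogonalIdempotents.exp_sum_smul {R : Type*} [NormedRing R] [NormedAlgebra ℂ R]
    {e : ι → R} (he : CompleteOrthogonalIdempotents e) (a : ι → ℂ) :
    NormedSpace.exp (∑ i, a i • e i) = ∑ i, Complex.exp (a i) • e i := by
  rw [NormedSpace.exp_eq_tsum ℂ]
  refine HasSum.tsum_eq ?_
  simp_rw [he.sum_smul_pow, Finset.smul_sum, smul_smul]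
  refine hasSum_sum fun i _ => ?_
  rw [Complex.exp_eq_exp_ℂ]
  exact (NormedSpace.exp_series_hasSum_exp' (𝕂 := ℂ) (a i)).smul_const (e i)

theorem OrthogonalIdempotents.sum_sum_smul_mul_mul_of_eq {𝕜 R : Type*} [Semiring R]
    [SMulZeroClass 𝕜 R] {e : ι → R} (he : OrthogonalIdempotents e) {S T : Finset ι} {A : R}
    (hA : A = (∑ i ∈ S, e i) * A * ∑ j ∈ T, e j) (c : ι → ι → 𝕜) :
    ∑ μ, ∑ ν, c μ ν • (e μ * A * e ν) = ∑ μ ∈ S, ∑ ν ∈ T, c μ ν • (e μ * A * e ν) := by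
  have hzero : ∀ μ ν, μ ∉ S ∨ ν ∉ T → e μ * A * e ν = 0 := by
    intro μ ν h
    rw [hA, show e μ * ((∑ i ∈ S, e i) * A * ∑ j ∈ T, e j) * e ν
      = (e μ * ∑ i ∈ S, e i) * A * ((∑ j ∈ T, e j) * e ν) by simp only [mul_assoc]]
    rcases h with hμ | hν
    · rw [he.mul_sum_of_notMem hμ, zero_mul, zero_mul]
    · rw [Finset.sum_mul, Finset.sum_eq_zero fun j hj => he.ortho (ne_of_mem_of_not_mem hj hν),
        mul_zero]
  rw [← Finset.sum_subset S.subset_univ fun μ _ hμ => Finset.sum_eq_zero fun ν _ => by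
    rw [hzero μ ν (.inl hμ), smul_zero]]
  exact Finset.sum_congr rfl fun μ _ => (Finset.sum_subset T.subset_univ fun ν _ hν => by
    rw [hzero μ ν (.inr hν), smul_zero]).symm

end Idempotents

section Evolution

variable {V : Type*} [NormedAddCommGroup V] [NormedSpace ℂ V] {ι : Type*} [Fintype ι]
  {e : ι → V →L[ℂ] V}

theorem heis_sum_smul (he : CompleteOrthogonalIdempotents e) (E : ι → ℝ) (s : ℝ)
    (A : V →L[ℂ] V) :
    heis (∑ μ, (E μ : ℂ) • e μ) s A =
      ∑ μ, ∑ ν, Complex.exp (Complex.I * ↑(E μ - E ν) * s) • (e μ * A * e ν) := by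
  simp_rw [heis, Finset.smul_sum, smul_smul, he.exp_sum_smul, Finset.sum_mul, Finset.mul_sum,
    smul_mul_assoc, mul_smul_comm, smul_smul, ← Complex.exp_add]
  refine Finset.sum_congr rfl fun μ _ => Finset.sum_congr rfl fun ν _ => ?_
  push_cast
  ring_nf

variable [CompleteSpace V]

theorem intervalIntegral_heis_sum_smul (he : CompleteOrthogonalIdempotents e) (E : ι → ℝ)
    (A : V →L[ℂ] V) (t : ℝ) :
    ∫ s in (0 : ℝ)..t, heis (∑ μ, (E μ : ℂ) • e μ) s A =
      ∑ μ, ∑ ν, phaseIntegral (E μ - E ν) t • (e μ * A * e ν) := by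
  simp_rw [heis_sum_smul he]
  rw [intervalIntegral.integral_finsetSum fun μ _ =>
    Continuous.intervalIntegrable (by fun_prop) _ _]
  refine Finset.sum_congr rfl fun μ _ => ?_
  rw [intervalIntegral.integral_finsetSum fun ν _ =>
    Continuous.intervalIntegrable (by fun_prop) _ _]
  simp_rw [intervalIntegral.integral_smul_const, phaseIntegral]

theorem integral_smul_intervalIntegral_heis_sum_smul (he : CompleteOrthogonalIdempotents e)
    (E : ι → ℝ) (A : V →L[ℂ] V) {f : ℝ → ℂ} (hf : AEStronglyMeasurable f)
    (hf1 : Integrable fun t => ‖f t‖ * (1 + |t|)) :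
    ∫ t, f t • ∫ s in (0 : ℝ)..t, heis (∑ μ, (E μ : ℂ) • e μ) s A =
      ∑ μ, ∑ ν, (∫ t, f t * phaseIntegral (E μ - E ν) t) • (e μ * A * e ν) := by
  have hint : ∀ l : ℝ, ∀ B : V →L[ℂ] V,
      Integrable fun t => (f t * phaseIntegral l t) • B :=
    fun l B => (integrable_mul_phaseIntegral hf hf1 l).smul_const B
  simp_rw [intervalIntegral_heis_sum_smul he, Finset.smul_sum, smul_smul]
  rw [integral_finsetSum _ fun μ _ => integrable_finsetSum _ fun ν _ => hint _ _]
  refine Finset.sum_congr rfl fun μ _ => ?_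
  rw [integral_finsetSum _ fun ν _ => hint _ _]
  simp_rw [integral_smul_const]

theorem aiL_sub_invL_sum_smul (he : CompleteOrthogonalIdempotents e) (E : ι → ℝ)
    (A : V →L[ℂ] V) {β : ℝ} (hβ : 0 < β) {w : ℝ → ℂ} (hw : AEStronglyMeasurable w)
    (hw1 : Integrable fun t => ‖w t‖ * (1 + |t|)) :
    aiL (∑ μ, (E μ : ℂ) • e μ) β A - invL (∑ μ, (E μ : ℂ) • e μ) w A =
      ∑ μ, ∑ ν, ((∫ t, (phi β t : ℂ) * phaseIntegral (E μ - E ν) t) -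
        ∫ t, w t * phaseIntegral (E μ - E ν) t) • (e μ * A * e ν) := by
  simp_rw [aiL, invL, ← Complex.coe_smul]
  rw [integral_smul_intervalIntegral_heis_sum_smul he E A
      (continuous_ofReal_phi β).aestronglyMeasurable (integrable_norm_phi_mul_one_add_abs hβ),
    integral_smul_intervalIntegral_heis_sum_smul he E A hw hw1]
  simp_rw [← Finset.sum_sub_distrib, ← sub_smul]

end Evolution

section InnerProductSpace

variable {𝕜 V ι : Type*} [RCLike 𝕜] [NormedAddCommGroup V] [InnerProductSpace 𝕜 V]

theorem norm_sum_sq_of_pairwise_inner_eq_zero {v : ι → V} {s : Finset ι}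
    (hv : (s : Set ι).Pairwise fun i j => ⟪v i, v j⟫_𝕜 = 0) :
    ‖∑ i ∈ s, v i‖ ^ 2 = ∑ i ∈ s, ‖v i‖ ^ 2 := by
  classical
  induction s using Finset.induction_on with
  | empty => simp
  | insert a s ha ih =>
    rw [Finset.coe_insert, Set.pairwise_insert] at hv
    have horth : ⟪v a, ∑ i ∈ s, v i⟫_𝕜 = 0 := by
      rw [inner_sum]
      exact Finset.sum_eq_zero fun j hj => (hv.2 j hj (ne_of_mem_of_not_mem hj ha).symm).1
    rw [Finset.sum_insert ha, Finset.sum_insert ha, @norm_add_sq 𝕜, horth, ih hv.1]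
    simp

theorem norm_sum_smul_le [CompleteSpace V] {e : ι → V →L[𝕜] V} (hsa : ∀ i, IsSelfAdjoint (e i))
    (he : OrthogonalIdempotents e) (s : Finset ι) {c : ι → 𝕜} {C : ℝ} (hC : 0 ≤ C)
    (hc : ∀ i ∈ s, ‖c i‖ ≤ C) :
    ‖∑ i ∈ s, c i • e i‖ ≤ C := by
  refine ContinuousLinearMap.opNorm_le_bound _ hC fun x => ?_
  have horth (a : ι → 𝕜) : (s : Set ι).Pairwise fun i j => ⟪a i • e i x, a j • e j x⟫_𝕜 = 0 :=
    fun i _ j _ hij => by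
      dsimp only
      rw [inner_smul_left, inner_smul_right,
        show ⟪e i x, e j x⟫_𝕜 = ⟪x, e i (e j x)⟫_𝕜 from (hsa i).isSymmetric _ _,
        ← mul_apply_eq_comp, he.ortho hij]
      simp
  have hP : IsStarProjection (∑ i ∈ s, e i) :=
    ⟨he.isIdempotentElem_sum, isSelfAdjoint_sum s fun i _ => hsa i⟩
  have hproj : ∑ i ∈ s, ‖e i x‖ ^ 2 ≤ ‖x‖ ^ 2 := by
    have h := norm_sum_sq_of_pairwise_inner_eq_zero (horth 1)
    simp only [Pi.one_apply, one_smul] at h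
    rw [← h, ← sum_apply]
    gcongr
    exact (ContinuousLinearMap.le_opNorm _ x).trans
      (mul_le_of_le_one_left (norm_nonneg x) hP.norm_le)
  refine (pow_le_pow_iff_left₀ (norm_nonneg _) (by positivity) two_ne_zero).mp ?_
  calc ‖(∑ i ∈ s, c i • e i) x‖ ^ 2 = ∑ i ∈ s, ‖c i‖ ^ 2 * ‖e i x‖ ^ 2 := by
        simp_rw [sum_apply, smul_apply, norm_sum_sq_of_pairwise_inner_eq_zero (horth c),
          norm_smul, mul_pow]
    _ ≤ ∑ i ∈ s, C ^ 2 * ‖e i x‖ ^ 2 := by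
        gcongr with i hi
        exact hc i hi
    _ ≤ (C * ‖x‖) ^ 2 := by
        rw [← Finset.mul_sum, mul_pow]
        gcongr

end InnerProductSpace

section FiniteDimensional

variable {V ι : Type*} [NormedAddCommGroup V] [InnerProductSpace ℂ V] [FiniteDimensional ℂ V]
  {e : ι → V →L[ℂ] V}

theorem IsStarProjection.norm_le_re_trace {p : V →L[ℂ] V} (hp : IsStarProjection p) :
    ‖p‖ ≤ (LinearMap.trace ℂ V p).re := by
  rw [(LinearMap.IsIdempotentElem.isProj_range _
      (ContinuousLinearMap.IsIdempotentElem.toLinearMap hp.isIdempotentElem)).trace,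
    Complex.natCast_re]
  rcases eq_or_ne p 0 with rfl | hp0
  · simp
  · refine hp.norm_le.trans (Nat.one_le_cast.mpr (Nat.one_le_iff_ne_zero.mpr ?_))
    rw [Ne, Submodule.finrank_eq_zero, LinearMap.range_eq_bot]
    exact ContinuousLinearMap.coe_injective.ne hp0

theorem norm_sum_sum_smul_mul_mul_le (hsa : ∀ i, IsSelfAdjoint (e i))
    (he : OrthogonalIdempotents e) (S T : Finset ι) (A : V →L[ℂ] V) {c : ι → ι → ℂ} {C : ℝ}
    (hC : 0 ≤ C) (hc : ∀ μ ∈ S, ∀ ν ∈ T, ‖c μ ν‖ ≤ C) :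
    ‖∑ μ ∈ S, ∑ ν ∈ T, c μ ν • (e μ * A * e ν)‖ ≤
      (LinearMap.trace ℂ V ↑(∑ μ ∈ S, e μ)).re * ‖A‖ * C := by
  have hrow (μ : ι) : ∑ ν ∈ T, c μ ν • (e μ * A * e ν) = e μ * A * ∑ ν ∈ T, c μ ν • e ν := by
    simp only [Finset.mul_sum, mul_smul_comm]
  calc ‖∑ μ ∈ S, ∑ ν ∈ T, c μ ν • (e μ * A * e ν)‖
      ≤ ∑ μ ∈ S, ‖e μ‖ * ‖A‖ * C := by
        simp_rw [hrow]
        refine (norm_sum_le _ _).trans (Finset.sum_le_sum fun μ hμ => ?_)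
        exact norm_mul₃_le.trans (by gcongr; exact norm_sum_smul_le hsa he T hC (hc μ hμ))
    _ ≤ ∑ μ ∈ S, (LinearMap.trace ℂ V ↑(e μ)).re * ‖A‖ * C := by
        gcongr with μ
        exact IsStarProjection.norm_le_re_trace ⟨he.idem μ, hsa μ⟩
    _ = (LinearMap.trace ℂ V ↑(∑ μ ∈ S, e μ)).re * ‖A‖ * C := by
        rw [← Finset.sum_mul, ← Finset.sum_mul, ContinuousLinearMap.toLinearMap_sum, map_sum,
          Complex.re_sum]

theorem norm_sum_sum_smul_mul_mul_le' (hsa : ∀ i, IsSelfAdjoint (e i))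
    (he : OrthogonalIdempotents e) (S T : Finset ι) (A : V →L[ℂ] V) {c : ι → ι → ℂ} {C : ℝ}
    (hC : 0 ≤ C) (hc : ∀ μ ∈ T, ∀ ν ∈ S, ‖c μ ν‖ ≤ C) :
    ‖∑ μ ∈ T, ∑ ν ∈ S, c μ ν • (e μ * A * e ν)‖ ≤
      (LinearMap.trace ℂ V ↑(∑ ν ∈ S, e ν)).re * ‖A‖ * C := by
  have h := norm_sum_sum_smul_mul_mul_le hsa he S T (star A) (c := fun ν μ => star (c μ ν)) hC
    fun ν hν μ hμ => (norm_star (c μ ν)).trans_le (hc μ hμ ν hν)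
  calc ‖∑ μ ∈ T, ∑ ν ∈ S, c μ ν • (e μ * A * e ν)‖
      = ‖star (∑ μ ∈ T, ∑ ν ∈ S, c μ ν • (e μ * A * e ν))‖ := (norm_star _).symm
    _ = ‖∑ ν ∈ S, ∑ μ ∈ T, star (c μ ν) • (e ν * star A * e μ)‖ := by
        simp only [star_sum, star_smul, star_mul, (hsa _).star_eq, mul_assoc]
        rw [Finset.sum_comm]
    _ ≤ (LinearMap.trace ℂ V ↑(∑ ν ∈ S, e ν)).re * ‖star A‖ * C := h
    _ = (LinearMap.trace ℂ V ↑(∑ ν ∈ S, e ν)).re * ‖A‖ * C := by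
        rw [show ‖star A‖ = ‖A‖ from norm_star A]

end FiniteDimensional

theorem stmt9 {V : Type*} [NormedAddCommGroup V] [InnerProductSpace ℂ V]
    [FiniteDimensional ℂ V]
    {ι : Type*} [Fintype ι] (E : ι → ℝ) (Pr : ι → (V →L[ℂ] V))
    (hPsa : ∀ μ, IsSelfAdjoint (Pr μ))
    (hPidem : ∀ μ, Pr μ * Pr μ = Pr μ)
    (hPorth : ∀ μ ν, μ ≠ ν → Pr μ * Pr ν = 0)
    (hPsum : ∑ μ, Pr μ = 1)
    (H : V →L[ℂ] V) (hH : H = ∑ μ, (E μ : ℂ) • Pr μ)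
    (S : Finset ι) (P : V →L[ℂ] V) (hP : P = ∑ μ ∈ S, Pr μ)
    (γ : ℝ) (hγ : 0 < γ)
    (hgap : ∀ μ ∈ S, ∀ ν ∉ S, γ ≤ |E μ - E ν|)
    (w : ℝ → ℂ) (hwmeas : Measurable w)
    (hwint : Integrable (fun t : ℝ => ‖w t‖ * (1 + |t|)))
    (hwone : ∫ t : ℝ, w t = 1)
    (hwfour : ∀ l : ℝ, γ ≤ |l| →
      ∫ t : ℝ, w t * Complex.exp (-(Complex.I * (l : ℂ) * (t : ℂ))) = 0)
    (A : V →L[ℂ] V) (hA : A = P * A * (1 - P) ∨ A = (1 - P) * A * P)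
    (β : ℝ) (hβ : 0 < β) :
    ‖aiL H β A - invL H w A‖ ≤
      (LinearMap.trace ℂ V (P : V →ₗ[ℂ] V)).re * ‖A‖ * γ⁻¹ *
        Real.exp (-(γ ^ 2 / (4 * β ^ 2))) := by
  classical
  have he : CompleteOrthogonalIdempotents Pr := ⟨⟨hPidem, hPorth⟩, hPsum⟩
  have hw : AEStronglyMeasurable w := hwmeas.aestronglyMeasurable
  have hcoeff (μ ν : ι) :=
    norm_integral_phi_mul_phaseIntegral_sub_le (l := E μ - E ν) hβ hw hwint hwone hγ hwfour
  have hcompl : 1 - P = ∑ μ ∈ Sᶜ, Pr μ := by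
    rw [hP, ← hPsum, ← Finset.sum_add_sum_compl S, add_sub_cancel_left]
  rw [hcompl, hP] at hA
  rw [hH, aiL_sub_invL_sum_smul he E A hβ hw hwint, mul_assoc _ γ⁻¹, hP]
  rcases hA with hA | hA
  · rw [he.toOrthogonalIdempotents.sum_sum_smul_mul_mul_of_eq hA]
    exact norm_sum_sum_smul_mul_mul_le hPsa he.toOrthogonalIdempotents S Sᶜ A (by positivity)
      fun μ hμ ν hν => hcoeff μ ν (hgap μ hμ ν (Finset.mem_compl.mp hν))
  · rw [he.toOrthogonalIdempotents.sum_sum_smul_mul_mul_of_eq hA]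
    exact norm_sum_sum_smul_mul_mul_le' hPsa he.toOrthogonalIdempotents S Sᶜ A (by positivity)
      fun μ hμ ν hν =>
        hcoeff μ ν (abs_sub_comm (E ν) (E μ) ▸ hgap ν hν μ (Finset.mem_compl.mp hμ))
end

section
/- Let H be a Hermitian operator on a finite-dimensional complex Hilbert space with spectral decomposition H = ∑_{μ∈ι} E_μ P_μ, let S ⊆ ι, let γ > 0 and 0 ≤ Δ < γ/4 be such that E_ν − E_μ ≤ Δ for all μ, ν ∈ S and E_ν − E_μ ≥ γ for all μ ∈ S, ν ∉ S. Then for every operator A and every β > 0, ‖∑_{μ∈S} ∑_{ν∉S} P_μ A P_ν − ∑_{μ∈S} ∑_{ν∈ι} G_{β,γ}(E_ν − E_μ) P_μ A P_ν‖ ≤ (6|S|/√π)·(β/γ)·e^{−γ²/(64β²)}·‖A‖. -/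
/-!
For `μ ∈ S` the difference has coefficient `c_{μν} = 𝟙[ν ∉ S] - G_{β,γ}(E_ν - E_μ)` on the block
`P_μ A P_ν`. This is a Gaussian tail: for `ν ∈ S` the argument of `G` is at most `γ/4`, for
`ν ∉ S` it is at least `γ`, and in both cases the tail starts beyond `γ/(8β)`, so
`|c_{μν}| ≤ 4 (β/γ) e^{-γ²/(64β²)} / √π`. For fixed `μ` the block row is `P_μ A (∑_ν c_{μν} P_ν)`,
and `‖∑_ν c_ν P_ν‖ ≤ max_ν |c_ν|` since the `P_ν` are orthogonal projections resolving the
identity; summing over `μ ∈ S` gives the bound.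
-/

open MeasureTheory Real

/-- `G_{β,γ}(ω) = (1/√π) ∫_{-∞}^{(ω-γ/2)/(2β)} e^{-x²} dx`, the convolution of a step
function at `γ/2` with the Gaussian filter. -/
noncomputable def G (β γ ω : ℝ) : ℝ :=
  (1 / Real.sqrt π) * ∫ x in Set.Iio ((ω - γ / 2) / (2 * β)), Real.exp (-(x ^ 2))

open Set

lemma integrable_exp_neg_sq : Integrable fun x : ℝ => exp (-x ^ 2) := by
  simpa using integrable_exp_neg_mul_sq one_pos

lemma integrable_mul_exp_neg_sq : Integrable fun x : ℝ => x * exp (-x ^ 2) := by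
  simpa using integrable_mul_exp_neg_mul_sq one_pos

lemma integral_exp_neg_sq : ∫ x, exp (-x ^ 2) = √π := by
  simpa using integral_gaussian 1

lemma integral_Ioi_mul_exp_neg_sq (a : ℝ) :
    ∫ x in Ioi a, x * exp (-x ^ 2) = exp (-a ^ 2) / 2 := by
  have hderiv : ∀ x ∈ Ioi a, HasDerivAt (fun x => -exp (-x ^ 2) / 2) (x * exp (-x ^ 2)) x :=
    fun x _ => ((hasDerivAt_pow 2 x).fun_neg.exp.fun_neg.div_const 2).congr_deriv
      (by push_cast; ring)
  have hlim : Filter.Tendsto (fun x : ℝ => -exp (-x ^ 2) / 2) Filter.atTop (nhds 0) := by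
    simpa using (tendsto_exp_atBot.comp <| Filter.tendsto_neg_atTop_atBot.comp <|
      Filter.tendsto_pow_atTop two_ne_zero).neg.div_const 2
  rw [integral_Ioi_of_hasDerivAt_of_tendsto (by fun_prop) hderiv
    integrable_mul_exp_neg_sq.integrableOn hlim]
  ring

lemma integral_Ioi_exp_neg_sq_le {a t : ℝ} (ha : 0 < a) (hat : a ≤ t) :
    ∫ x in Ioi t, exp (-x ^ 2) ≤ exp (-a ^ 2) / (2 * a) := by
  calc ∫ x in Ioi t, exp (-x ^ 2)
      ≤ ∫ x in Ioi t, a⁻¹ * (x * exp (-x ^ 2)) := by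
        refine setIntegral_mono_on integrable_exp_neg_sq.integrableOn
          (integrable_mul_exp_neg_sq.integrableOn.const_mul _)
          measurableSet_Ioi fun x hx => ?_
        rw [← mul_assoc, inv_mul_eq_div]
        exact le_mul_of_one_le_left (exp_pos _).le
          ((one_le_div ha).2 (hat.trans (le_of_lt hx)))
    _ = a⁻¹ * (exp (-t ^ 2) / 2) := by rw [integral_const_mul, integral_Ioi_mul_exp_neg_sq]
    _ ≤ a⁻¹ * (exp (-a ^ 2) / 2) := by gcongr
    _ = exp (-a ^ 2) / (2 * a) := by field_simp

lemma G_eq_integral_Ioi (β γ ω : ℝ) :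
    G β γ ω = 1 / √π * ∫ x in Ioi ((γ / 2 - ω) / (2 * β)), exp (-x ^ 2) := by
  rw [G, ← integral_Iic_eq_integral_Iio,
    show (ω - γ / 2) / (2 * β) = -((γ / 2 - ω) / (2 * β)) by ring, ← integral_comp_neg_Ioi]
  simp only [neg_sq]

lemma one_sub_G_eq_integral_Ioi (β γ ω : ℝ) :
    1 - G β γ ω = 1 / √π * ∫ x in Ioi ((ω - γ / 2) / (2 * β)), exp (-x ^ 2) := by
  have hsplit := integral_add_compl (measurableSet_Iio (a := (ω - γ / 2) / (2 * β)))
    integrable_exp_neg_sq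
  rw [compl_Iio, integral_Ici_eq_integral_Ioi, integral_exp_neg_sq] at hsplit
  rw [G, eq_sub_of_add_eq' hsplit, mul_sub, one_div_mul_cancel (sqrt_pos.2 pi_pos).ne']

lemma gaussian_tail_le {β γ t : ℝ} (hβ : 0 < β) (hγ : 0 < γ) (ht : γ / (8 * β) ≤ t) :
    1 / √π * ∫ x in Ioi t, exp (-x ^ 2) ≤
      4 * (β / γ) / √π * exp (-(γ ^ 2 / (64 * β ^ 2))) := by
  calc 1 / √π * ∫ x in Ioi t, exp (-x ^ 2)
      ≤ 1 / √π * (exp (-(γ / (8 * β)) ^ 2) / (2 * (γ / (8 * β)))) := by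
        gcongr
        exact integral_Ioi_exp_neg_sq_le (by positivity) ht
    _ = 4 * (β / γ) / √π * exp (-(γ ^ 2 / (64 * β ^ 2))) := by
        rw [show (γ / (8 * β)) ^ 2 = γ ^ 2 / (64 * β ^ 2) by ring]
        field_simp
        ring

lemma abs_G_le {β γ ω : ℝ} (hβ : 0 < β) (hγ : 0 < γ) (hω : ω ≤ γ / 4) :
    |G β γ ω| ≤ 4 * (β / γ) / √π * exp (-(γ ^ 2 / (64 * β ^ 2))) := by
  rw [G_eq_integral_Ioi, abs_of_nonneg (by positivity)]
  refine gaussian_tail_le hβ hγ ?_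
  rw [div_le_div_iff₀ (by positivity) (by positivity)]
  nlinarith

lemma abs_one_sub_G_le {β γ ω : ℝ} (hβ : 0 < β) (hγ : 0 < γ) (hω : γ ≤ ω) :
    |1 - G β γ ω| ≤ 4 * (β / γ) / √π * exp (-(γ ^ 2 / (64 * β ^ 2))) := by
  rw [one_sub_G_eq_integral_Ioi, abs_of_nonneg (by positivity)]
  refine gaussian_tail_le hβ hγ ?_
  rw [div_le_div_iff₀ (by positivity) (by positivity)]
  nlinarith

section Projections

variable {𝕜 E ι : Type*} [RCLike 𝕜] [NormedAddCommGroup E] [InnerProductSpace 𝕜 E]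

lemma norm_sum_sq_eq_sum_norm_sq_of_pairwise_inner_eq_zero (s : Finset ι) {f : ι → E}
    (hf : Pairwise fun i j => inner 𝕜 (f i) (f j) = 0) :
    ‖∑ i ∈ s, f i‖ ^ 2 = ∑ i ∈ s, ‖f i‖ ^ 2 := by
  classical
  induction s using Finset.induction_on with
  | empty => simp
  | insert a s ha ih =>
    have horth : inner 𝕜 (f a) (∑ i ∈ s, f i) = 0 := by
      rw [inner_sum]; exact Finset.sum_eq_zero fun i hi => hf (ne_of_mem_of_not_mem hi ha).symm
    rw [Finset.sum_insert ha, Finset.sum_insert ha, ← ih, sq, sq, sq,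
      norm_add_sq_eq_norm_sq_add_norm_sq_of_inner_eq_zero _ _ horth]

lemma inner_apply_apply_eq_zero_of_mul_eq_zero [CompleteSpace E] {P Q : E →L[𝕜] E}
    (hP : IsSelfAdjoint P) (hPQ : P * Q = 0) (v w : E) : inner 𝕜 (P v) (Q w) = 0 := by
  rw [← ContinuousLinearMap.adjoint_inner_right, hP.adjoint_eq, ← mul_apply_eq_comp,
    hPQ, zero_apply, inner_zero_right]

variable [CompleteSpace E] [Fintype ι] {Pr : ι → E →L[𝕜] E}

lemma norm_sum_smul_le_of_orthogonal_projections (hsa : ∀ μ, IsSelfAdjoint (Pr μ))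
    (horth : Pairwise fun μ ν => Pr μ * Pr ν = 0) (hsum : ∑ μ, Pr μ = 1)
    {c : ι → 𝕜} {M : ℝ} (hM0 : 0 ≤ M) (hc : ∀ ν, ‖c ν‖ ≤ M) :
    ‖∑ ν, c ν • Pr ν‖ ≤ M := by
  refine ContinuousLinearMap.opNorm_le_bound _ hM0 fun v => ?_
  have hpyth (d : ι → 𝕜) : ‖∑ ν, d ν • Pr ν v‖ ^ 2 = ∑ ν, ‖d ν‖ ^ 2 * ‖Pr ν v‖ ^ 2 := by
    rw [norm_sum_sq_eq_sum_norm_sq_of_pairwise_inner_eq_zero (𝕜 := 𝕜) _ fun μ ν hμν => by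
      dsimp only
      rw [inner_smul_left, inner_smul_right,
        inner_apply_apply_eq_zero_of_mul_eq_zero (hsa μ) (horth hμν), mul_zero, mul_zero]]
    simp only [norm_smul, mul_pow]
  have hv : ‖v‖ ^ 2 = ∑ ν, ‖Pr ν v‖ ^ 2 := by
    simpa [← sum_apply, hsum] using hpyth 1
  rw [← pow_le_pow_iff_left₀ (norm_nonneg _) (by positivity) two_ne_zero, sum_apply]
  calc ‖∑ ν, (c ν • Pr ν) v‖ ^ 2 = ∑ ν, ‖c ν‖ ^ 2 * ‖Pr ν v‖ ^ 2 := hpyth c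
    _ ≤ ∑ ν, M ^ 2 * ‖Pr ν v‖ ^ 2 := by gcongr with ν; exact hc ν
    _ = (M * ‖v‖) ^ 2 := by rw [← Finset.mul_sum, mul_pow, hv]

lemma norm_le_one_of_orthogonal_projections [DecidableEq ι] (hsa : ∀ μ, IsSelfAdjoint (Pr μ))
    (horth : Pairwise fun μ ν => Pr μ * Pr ν = 0) (hsum : ∑ μ, Pr μ = 1) (μ : ι) :
    ‖Pr μ‖ ≤ 1 := by
  have := norm_sum_smul_le_of_orthogonal_projections hsa horth hsum zero_le_one
    (c := fun ν => if ν = μ then 1 else 0) fun ν => by split_ifs <;> simp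
  simpa [ite_smul] using this

end Projections

lemma Finset.sum_compl_sub_sum_smul {R M ι : Type*} [Ring R] [AddCommGroup M] [Module R M]
    [Fintype ι] [DecidableEq ι] (S : Finset ι) (X : ι → M) (g : ι → R) :
    ∑ ν ∈ Sᶜ, X ν - ∑ ν, g ν • X ν = ∑ ν, ((if ν ∈ S then 0 else 1) - g ν) • X ν := by
  simp [sub_smul, ite_smul, Finset.sum_ite, Finset.filter_not, Finset.compl_eq_univ_sdiff]

theorem stmt13_general {V : Type*} [NormedAddCommGroup V] [InnerProductSpace ℂ V]
    [FiniteDimensional ℂ V]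
    {ι : Type*} [Fintype ι] [DecidableEq ι] (E : ι → ℝ) (Pr : ι → (V →L[ℂ] V))
    (hPsa : ∀ μ, IsSelfAdjoint (Pr μ))
    (hPorth : ∀ μ ν, μ ≠ ν → Pr μ * Pr ν = 0)
    (hPsum : ∑ μ, Pr μ = 1)
    (S : Finset ι)
    (γ Δ : ℝ) (hγ : 0 < γ) (hΔγ : Δ < γ / 4)
    (hwidth : ∀ μ ∈ S, ∀ ν ∈ S, E ν - E μ ≤ Δ)
    (hgap : ∀ μ ∈ S, ∀ ν ∉ S, γ ≤ E ν - E μ)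
    (A : V →L[ℂ] V) (β : ℝ) (hβ : 0 < β) :
    ‖(∑ μ ∈ S, ∑ ν ∈ Sᶜ, Pr μ * A * Pr ν) -
        ∑ μ ∈ S, ∑ ν, G β γ (E ν - E μ) • (Pr μ * A * Pr ν)‖ ≤
      6 * S.card / Real.sqrt π * (β / γ) * Real.exp (-(γ ^ 2 / (64 * β ^ 2))) * ‖A‖ := by
  have hK : 4 * (β / γ) / √π * exp (-(γ ^ 2 / (64 * β ^ 2))) ≤
      6 * (β / γ) / √π * exp (-(γ ^ 2 / (64 * β ^ 2))) := by gcongr; norm_num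
  set K := 6 * (β / γ) / √π * exp (-(γ ^ 2 / (64 * β ^ 2)))
  set c : ι → ι → ℝ := fun μ ν => (if ν ∈ S then 0 else 1) - G β γ (E ν - E μ)
  have hc : ∀ μ ∈ S, ∀ ν, ‖(c μ ν : ℂ)‖ ≤ K := by
    intro μ hμ ν
    rw [Complex.norm_real, Real.norm_eq_abs]
    by_cases hν : ν ∈ S
    · simpa [c, hν] using (abs_G_le hβ hγ ((hwidth μ hμ ν hν).trans hΔγ.le)).trans hK
    · simpa [c, hν] using (abs_one_sub_G_le hβ hγ (hgap μ hμ ν hν)).trans hK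
  have hdiff : (∑ μ ∈ S, ∑ ν ∈ Sᶜ, Pr μ * A * Pr ν) -
      ∑ μ ∈ S, ∑ ν, G β γ (E ν - E μ) • (Pr μ * A * Pr ν) =
      ∑ μ ∈ S, Pr μ * A * ∑ ν, (c μ ν : ℂ) • Pr ν := by
    rw [← Finset.sum_sub_distrib]
    refine Finset.sum_congr rfl fun μ _ => ?_
    rw [Finset.sum_compl_sub_sum_smul, Finset.mul_sum]
    exact Finset.sum_congr rfl fun ν _ => by rw [mul_smul_comm, Complex.coe_smul]
  have hPorth' : Pairwise fun μ ν => Pr μ * Pr ν = 0 := fun μ ν => hPorth μ ν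
  rw [hdiff]
  calc ‖∑ μ ∈ S, Pr μ * A * ∑ ν, (c μ ν : ℂ) • Pr ν‖ ≤ ∑ μ ∈ S, 1 * ‖A‖ * K := by
        refine norm_sum_le_of_le S fun μ hμ => norm_mul₃_le.trans ?_
        gcongr
        · exact norm_le_one_of_orthogonal_projections hPsa hPorth' hPsum μ
        · exact norm_sum_smul_le_of_orthogonal_projections hPsa hPorth' hPsum (by positivity)
            (hc μ hμ)
    _ = 6 * S.card / √π * (β / γ) * exp (-(γ ^ 2 / (64 * β ^ 2))) * ‖A‖ := by
        rw [Finset.sum_const, nsmul_eq_mul]; ring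

theorem stmt13 {V : Type*} [NormedAddCommGroup V] [InnerProductSpace ℂ V]
    [FiniteDimensional ℂ V]
    {ι : Type*} [Fintype ι] [DecidableEq ι] (E : ι → ℝ) (Pr : ι → (V →L[ℂ] V))
    (hPsa : ∀ μ, IsSelfAdjoint (Pr μ))
    (hPidem : ∀ μ, Pr μ * Pr μ = Pr μ)
    (hPorth : ∀ μ ν, μ ≠ ν → Pr μ * Pr ν = 0)
    (hPsum : ∑ μ, Pr μ = 1)
    (H : V →L[ℂ] V) (hH : H = ∑ μ, (E μ : ℂ) • Pr μ)
    (S : Finset ι)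
    (γ Δ : ℝ) (hγ : 0 < γ) (hΔ0 : 0 ≤ Δ) (hΔγ : Δ < γ / 4)
    (hwidth : ∀ μ ∈ S, ∀ ν ∈ S, E ν - E μ ≤ Δ)
    (hgap : ∀ μ ∈ S, ∀ ν ∉ S, γ ≤ E ν - E μ)
    (A : V →L[ℂ] V) (β : ℝ) (hβ : 0 < β) :
    ‖(∑ μ ∈ S, ∑ ν ∈ Sᶜ, Pr μ * A * Pr ν) -
        ∑ μ ∈ S, ∑ ν, G β γ (E ν - E μ) • (Pr μ * A * Pr ν)‖ ≤
      6 * S.card / Real.sqrt π * (β / γ) * Real.exp (-(γ ^ 2 / (64 * β ^ 2))) * ‖A‖ :=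
  stmt13_general E Pr hPsa hPorth hPsum S γ Δ hγ hΔγ hwidth hgap A β hβ
end
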